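/- For all 0 < x₁ ≤ x₂, ℙ(X₁ ≤ x₁ and X₂ ≤ x₂) = (1 − exp(−λ·x₁))^{α₁+α₃}·(1 − exp(−λ·x₂))^{α₂}, and for all 0 < x₂ ≤ x₁, ℙ(X₁ ≤ x₁ and X₂ ≤ x₂) = (1 − exp(−λ·x₁))^{α₁}·(1 − exp(−λ·x₂))^{α₂+α₃} (the bivariate generalized exponential joint cdf). -/

import Mathlib

open MeasureTheory ProbabilityTheory Real

/-! Since `max u w ≤ a ∧ max v w ≤ b ↔ u ≤ a ∧ v ≤ b ∧ w ≤ min a b`, independence factors the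
joint cdf of `(X₁, X₂)` into the three marginal cdfs, evaluated at `x₁`, `x₂` and `min x₁ x₂`. The
two exponentiated-exponential factors at the same point then merge by `rpow_add`. -/

namespace ProbabilityTheory.iIndepFun

variable {Ω β : Type*} [MeasurableSpace Ω] {P : Measure Ω} [LinearOrder β] [TopologicalSpace β]
  [OrderClosedTopology β] [MeasurableSpace β] [OpensMeasurableSpace β]

lemma measure_iInter_le_eq_prod {ι : Type*} [Fintype ι] {U : ι → Ω → β} (hindep : iIndepFun U P)
    (t : ι → β) : P (⋂ i, {ω | U i ω ≤ t i}) = ∏ i, P {ω | U i ω ≤ t i} :=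
  hindep.meas_iInter fun i => ⟨Set.Iic (t i), measurableSet_Iic, rfl⟩

lemma measure_max_le_and_max_le {U : Fin 3 → Ω → β} (hindep : iIndepFun U P) (a b : β) :
    P {ω | max (U 0 ω) (U 2 ω) ≤ a ∧ max (U 1 ω) (U 2 ω) ≤ b} =
      P {ω | U 0 ω ≤ a} * P {ω | U 1 ω ≤ b} * P {ω | U 2 ω ≤ min a b} := by
  have hset : {ω | max (U 0 ω) (U 2 ω) ≤ a ∧ max (U 1 ω) (U 2 ω) ≤ b} =
      ⋂ i, {ω | U i ω ≤ ![a, b, min a b] i} := by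
    ext ω
    simp only [Set.mem_ofPred_eq, Set.mem_iInter, Fin.forall_fin_succ, IsEmpty.forall_iff,
      Matrix.cons_val_zero, Matrix.cons_val_succ, Fin.succ_zero_eq_one, Fin.succ_one_eq_two,
      Matrix.cons_val_fin_one, max_le_iff, le_min_iff, and_true]
    tauto
  rw [hset, hindep.measure_iInter_le_eq_prod, Fin.prod_univ_three]
  rfl

end ProbabilityTheory.iIndepFun

lemma one_sub_exp_neg_mul_pos {lam x : ℝ} (hlam : 0 < lam) (hx : 0 < x) :
    0 < 1 - exp (-lam * x) := by
  rw [sub_pos, exp_lt_one_iff, neg_mul, neg_lt_zero]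
  exact mul_pos hlam hx

lemma ofReal_rpow_mul_ofReal_rpow {c : ℝ} (hc : 0 < c) (p q : ℝ) :
    ENNReal.ofReal (c ^ p) * ENNReal.ofReal (c ^ q) = ENNReal.ofReal (c ^ (p + q)) := by
  rw [← ENNReal.ofReal_mul (rpow_nonneg hc.le p), rpow_add hc]

theorem bge_joint_cdf_general
    {Ω : Type*} [MeasurableSpace Ω] (P : Measure Ω)
    (lam : ℝ) (hlam : 0 < lam)
    (α : Fin 3 → ℝ)
    (U : Fin 3 → Ω → ℝ)
    (hindep : iIndepFun U P)
    (hcdf_pos : ∀ i (x : ℝ), 0 ≤ x → P {ω | U i ω ≤ x} =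
      ENNReal.ofReal ((1 - Real.exp (-lam * x)) ^ (α i))) :
    (∀ x₁ x₂ : ℝ, 0 < x₁ → x₁ ≤ x₂ →
      P {ω | max (U 0 ω) (U 2 ω) ≤ x₁ ∧ max (U 1 ω) (U 2 ω) ≤ x₂} =
        ENNReal.ofReal ((1 - Real.exp (-lam * x₁)) ^ (α 0 + α 2) *
          (1 - Real.exp (-lam * x₂)) ^ α 1)) ∧
    (∀ x₁ x₂ : ℝ, 0 < x₂ → x₂ ≤ x₁ →
      P {ω | max (U 0 ω) (U 2 ω) ≤ x₁ ∧ max (U 1 ω) (U 2 ω) ≤ x₂} =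
        ENNReal.ofReal ((1 - Real.exp (-lam * x₁)) ^ α 0 *
          (1 - Real.exp (-lam * x₂)) ^ (α 1 + α 2))) := by
  constructor
  · intro x₁ x₂ hx₁ h12
    have hx₂ : 0 < x₂ := hx₁.trans_le h12
    have hF₁ := one_sub_exp_neg_mul_pos hlam hx₁
    rw [hindep.measure_max_le_and_max_le, min_eq_left h12, hcdf_pos 0 x₁ hx₁.le,
      hcdf_pos 1 x₂ hx₂.le, hcdf_pos 2 x₁ hx₁.le, mul_right_comm,
      ofReal_rpow_mul_ofReal_rpow hF₁, ENNReal.ofReal_mul (rpow_nonneg hF₁.le _)]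
  · intro x₁ x₂ hx₂ h21
    have hx₁ : 0 < x₁ := hx₂.trans_le h21
    have hF₂ := one_sub_exp_neg_mul_pos hlam hx₂
    rw [hindep.measure_max_le_and_max_le, min_eq_right h21, hcdf_pos 0 x₁ hx₁.le,
      hcdf_pos 1 x₂ hx₂.le, hcdf_pos 2 x₂ hx₂.le, mul_assoc,
      ofReal_rpow_mul_ofReal_rpow hF₂,
      ENNReal.ofReal_mul (rpow_nonneg (one_sub_exp_neg_mul_pos hlam hx₁).le _)]

/-- The bivariate generalized exponential joint cdf. -/
theorem bge_joint_cdf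
    {Ω : Type*} [MeasurableSpace Ω] (P : Measure Ω) [IsProbabilityMeasure P]
    (lam : ℝ) (hlam : 0 < lam)
    (α : Fin 3 → ℝ) (hα : ∀ i, 0 < α i)
    (U : Fin 3 → Ω → ℝ) (hUmeas : ∀ i, Measurable (U i))
    (hindep : iIndepFun U P)
    (hcdf_pos : ∀ i (x : ℝ), 0 ≤ x → P {ω | U i ω ≤ x} =
      ENNReal.ofReal ((1 - Real.exp (-lam * x)) ^ (α i)))
    (hcdf_neg : ∀ i (x : ℝ), x < 0 → P {ω | U i ω ≤ x} = 0) :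
    (∀ x₁ x₂ : ℝ, 0 < x₁ → x₁ ≤ x₂ →
      P {ω | max (U 0 ω) (U 2 ω) ≤ x₁ ∧ max (U 1 ω) (U 2 ω) ≤ x₂} =
        ENNReal.ofReal ((1 - Real.exp (-lam * x₁)) ^ (α 0 + α 2) *
          (1 - Real.exp (-lam * x₂)) ^ α 1)) ∧
    (∀ x₁ x₂ : ℝ, 0 < x₂ → x₂ ≤ x₁ →
      P {ω | max (U 0 ω) (U 2 ω) ≤ x₁ ∧ max (U 1 ω) (U 2 ω) ≤ x₂} =
        ENNReal.ofReal ((1 - Real.exp (-lam * x₁)) ^ α 0 *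
          (1 - Real.exp (-lam * x₂)) ^ (α 1 + α 2))) :=
  bge_joint_cdf_general P lam hlam α U hindep hcdf_pos
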